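/- Let (A, φ) be a non-commutative probability space and d ∈ ℕ, and equip M_d(A) with the functional φ^d(X) = (1/d) Σ_i φ(x_ii). If X = (x_ij) ∈ M_d(A) is uniformly R-cyclic with determining sequence (α_t), i.e. κ_t(x_{i_1 j_1},...,x_{i_t j_t}) = α_t when j_1 = i_2, j_2 = i_3, ..., j_t = i_1 and 0 otherwise, then the free cumulants of X in (M_d(A), φ^d) satisfy κ^d_t(X, X, ..., X) = d^{t-1} α_t for all t ≥ 1. -/

import Mathlib

open scoped Classical

/-- Non-crossing condition on the set of classes of a partition, for a linear order. -/
def IsNC {α : Type*} [LinearOrder α] (parts : Finset (Finset α)) : Prop :=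
  ∀ i j k l : α, i < k → k < j → j < l →
    ∀ B ∈ parts, ∀ C ∈ parts, B ≠ C →
      i ∈ B → j ∈ B → k ∈ C → l ∈ C → False

/-- The non-crossing partition lattice `NC(n)` of `{1,...,n}`. -/
abbrev NCP (n : ℕ) := {π : Finpartition (Finset.univ : Finset (Fin n)) // IsNC π.parts}

/-- The multiplicative extension `f_π(x₁,...,xₙ) = ∏_{C ∈ π} f_{|C|}(x_c : c ∈ C)`
of a family of functions, the arguments in each factor listed in increasing order. -/
noncomputable def extMul {X : Type*} (f : ∀ k, (Fin k → X) → ℂ) {n : ℕ}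
    (π : Finpartition (Finset.univ : Finset (Fin n))) (x : Fin n → X) : ℂ :=
  ∏ C ∈ π.parts, f C.card (fun i => x (C.orderIsoOfFin rfl i).1)

/-- The family `κ` satisfies the moment–cumulant relations
`φ(a₁ ⋯ aₙ) = Σ_{π ∈ NC(n)} κ_π(a₁,...,aₙ)` for the linear functional `φ`,
i.e. `κ` is the family of free cumulants of `(A, φ)`. -/
def MomentCumulant {A : Type*} [Ring A] [Algebra ℂ A]
    (φ : A →ₗ[ℂ] ℂ) (κ : ∀ k, (Fin k → A) → ℂ) : Prop :=
  ∀ (n : ℕ) (_ : n ≠ 0) (a : Fin n → A),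
    φ (List.ofFn a).prod = ∑ π : NCP n, extMul κ π.1 a

/-!
Write `X^t` entrywise: `φ^d(X^t) = d⁻¹ ∑_{j : [t] → [d]} φ(x_{j₁j₂} x_{j₂j₃} ⋯ x_{j_t j₁})`.
Expanding each term by the moment–cumulant formula in `A`, R-cyclicity makes a non-crossing
partition `π` contribute `∏_{C ∈ π} α_{|C|}` exactly for the labellings `j` with
`j(s + 1) = j(next element of the block of s)` for all `s`, i.e. those constant on the blocks of
the Kreweras complement of `π`; there are `d^{t + 1 - |π|}` of them. Hence
`φ^d(X^t) = ∑_π ∏_{C ∈ π} d^{|C| - 1} α_{|C|}`: the numbers `d^{k-1} α_k` satisfy the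
moment–cumulant relations of `X`, so they are its cumulants.

The labellings are counted by induction on the number of blocks: some block `B` is an interval of
the points still present, and deleting it replaces its conditions by the single identification
`j(min B) = j(point following B)`, which divides the count by `d`.
-/

open Finset

lemma Finset.sup_erase_eq_sdiff {α : Type*} [DecidableEq α] {P : Finset (Finset α)}
    (hdis : (P : Set (Finset α)).PairwiseDisjoint id) {B : Finset α} (hB : B ∈ P) :
    (P.erase B).sup id = P.sup id \ B := by
  ext x
  simp only [mem_sup, mem_erase, mem_sdiff, id]
  constructor
  · rintro ⟨D, ⟨hDB, hD⟩, hxD⟩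
    exact ⟨⟨D, hD, hxD⟩, fun hxB => disjoint_left.1 (hdis hD hB hDB) hxD hxB⟩
  · rintro ⟨⟨D, hD, hxD⟩, hxB⟩
    exact ⟨D, ⟨fun h => hxB (h ▸ hxD), hD⟩, hxD⟩

lemma card_le_of_pairwiseDisjoint {α : Type*} [Fintype α] {P : Finset (Finset α)} (hne : ∅ ∉ P)
    (hdis : (P : Set (Finset α)).PairwiseDisjoint id) : #P ≤ Fintype.card α :=
  (card_le_card_biUnion hdis fun _ hC => nonempty_iff_ne_empty.2 fun h => hne (h ▸ hC)).trans
    (card_le_univ _)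

lemma card_filter_and_eq_mul {ι β : Type*} [Fintype ι] [DecidableEq ι] [Fintype β] {a p : ι}
    (hap : a ≠ p) (Q : (ι → β) → Prop) (hQ : ∀ j v, Q (Function.update j a v) ↔ Q j) :
    #{j : ι → β | Q j ∧ j a = j p} * Fintype.card β = #{j : ι → β | Q j} := by
  rw [← card_univ (α := β), ← card_product]
  refine card_bij (fun x _ => Function.update x.1 a x.2) ?_ ?_ ?_
  · rintro ⟨j, v⟩ hx
    simp only [mem_product, mem_filter] at hx
    exact mem_filter.2 ⟨mem_univ _, (hQ j v).2 hx.1.2.1⟩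
  · rintro ⟨j, v⟩ hx ⟨j', v'⟩ hx' heq
    simp only [mem_product, mem_filter] at hx hx'
    have hv : v = v' := by simpa using congrFun heq a
    have hp : j p = j' p := by
      simpa [Function.update_of_ne (Ne.symm hap)] using congrFun heq p
    have hj : j = j' := by
      funext x
      by_cases hxa : x = a
      · subst hxa
        exact hx.1.2.2.trans (hp.trans hx'.1.2.2.symm)
      · simpa [Function.update_of_ne hxa] using congrFun heq x
    rw [hj, hv]
  · intro k hk
    refine ⟨⟨Function.update k a (k p), k a⟩, ?_, by simp⟩
    simp only [mem_product, mem_filter, mem_univ, true_and, and_true] at hk ⊢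
    exact ⟨(hQ k (k p)).2 hk, by simp [Function.update_of_ne (Ne.symm hap)]⟩

lemma Finpartition.prod_pow_card_sub_one {α M : Type*} [DecidableEq α] [CommMonoid M]
    {s : Finset α} (π : Finpartition s) (x : M) :
    ∏ C ∈ π.parts, x ^ (#C - 1) = x ^ (#s - #π.parts) := by
  rw [prod_pow_eq_pow_sum, sum_tsub_distrib _ fun C hC => card_pos.2 (π.nonempty_of_mem_parts hC),
    π.sum_card_parts, ← card_eq_sum_ones]

section CyclicSucc

variable {t : ℕ} [NeZero t]

lemma Fin.val_add_one_eq_mod (s : Fin t) : ((s + 1 : Fin t) : ℕ) = (s + 1) % t := by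
  rw [Fin.val_add, Fin.val_one', Nat.add_mod_mod]

lemma Fin.val_sub_add_one (s y : Fin t) :
    ((y - (s + 1) : Fin t) : ℕ) = if s < y then (y : ℕ) - s - 1 else (y : ℕ) + t - s - 1 := by
  have hs := Fin.val_add_one_eq_mod s
  have hy := y.isLt
  have hst := s.isLt
  rcases Nat.lt_or_ge ((s : ℕ) + 1) t with h | h
  · rw [Nat.mod_eq_of_lt h] at hs
    rcases lt_or_ge y (s + 1) with h' | h'
    · rw [Fin.coe_sub_iff_lt.2 h', hs]
      rw [Fin.lt_def, hs] at h'
      split_ifs with h'' <;> rw [Fin.lt_def] at h'' <;> omega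
    · rw [Fin.coe_sub_iff_le.2 h', hs]
      rw [Fin.le_def, hs] at h'
      split_ifs with h'' <;> rw [Fin.lt_def] at h'' <;> omega
  · rw [show (s : ℕ) + 1 = t by omega, Nat.mod_self] at hs
    rw [Fin.coe_sub_iff_le.2 (Fin.le_def.2 (hs ▸ Nat.zero_le _)), hs]
    split_ifs with h'' <;> rw [Fin.lt_def] at h'' <;> omega

/-- The first element of `S` after `s` in the cyclic order of `Fin t` (`s` itself if `S` is
empty), found as the minimizer of the cyclic distance `x - (s + 1)` from `s + 1`. -/
def cyclicSucc (S : Finset (Fin t)) (s : Fin t) : Fin t :=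
  if h : S.Nonempty then (S.image (· - (s + 1))).min' (h.image _) + (s + 1) else s

variable {S : Finset (Fin t)}

lemma cyclicSucc_mem (h : S.Nonempty) (s : Fin t) : cyclicSucc S s ∈ S := by
  rw [cyclicSucc, dif_pos h]
  obtain ⟨x, hx, hx_eq⟩ := mem_image.1 ((S.image (· - (s + 1))).min'_mem (h.image _))
  rwa [← hx_eq, sub_add_cancel]

lemma cyclicSucc_sub_le {x : Fin t} (hx : x ∈ S) (s : Fin t) :
    cyclicSucc S s - (s + 1) ≤ x - (s + 1) := by
  rw [cyclicSucc, dif_pos ⟨x, hx⟩, add_sub_cancel_right]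
  exact min'_le _ _ (mem_image_of_mem _ hx)

lemma cyclicSucc_eq_of_forall {x s : Fin t} (hx : x ∈ S)
    (hmin : ∀ y ∈ S, x - (s + 1) ≤ y - (s + 1)) : cyclicSucc S s = x := by
  have h := le_antisymm (cyclicSucc_sub_le hx s) (hmin _ (cyclicSucc_mem ⟨x, hx⟩ s))
  simpa using congrArg (· + (s + 1)) h

lemma cyclicSucc_univ (s : Fin t) : cyclicSucc univ s = s + 1 :=
  cyclicSucc_eq_of_forall (mem_univ _) fun y _ => by
    rw [sub_self]
    exact Fin.zero_le _

lemma cyclicSucc_max' (h : S.Nonempty) : cyclicSucc S (S.max' h) = S.min' h := by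
  refine cyclicSucc_eq_of_forall (S.min'_mem h) fun y hy => ?_
  have hyb := S.le_max' y hy
  have hay := S.min'_le y hy
  have := (S.max' h).isLt
  rw [Fin.le_def, Fin.val_sub_add_one, Fin.val_sub_add_one]
  rw [Fin.le_def] at hyb hay
  split_ifs <;> rw [Fin.lt_def] at * <;> omega

lemma cyclicSucc_eq_of_lt {x y : Fin t} (hy : y ∈ S) (hxy : x < y)
    (hmin : ∀ z ∈ S, x < z → y ≤ z) : cyclicSucc S x = y := by
  refine cyclicSucc_eq_of_forall hy fun z hz => ?_
  have := z.isLt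
  rw [Fin.le_def, Fin.val_sub_add_one, Fin.val_sub_add_one, if_pos hxy]
  rcases lt_or_ge x z with hxz | hzx
  · have := Fin.le_def.1 (hmin z hz hxz)
    rw [if_pos hxz]
    omega
  · rw [if_neg hzx.not_gt]
    rw [Fin.lt_def] at hxy
    omega

lemma cyclicSucc_mem_Ioc {x w : Fin t} (hw : w ∈ S) (hxw : x < w) :
    x < cyclicSucc S x ∧ cyclicSucc S x ≤ w := by
  have hm := Fin.le_def.1 (cyclicSucc_sub_le hw x)
  have := w.isLt
  have := (cyclicSucc S x).isLt
  rw [Fin.val_sub_add_one, Fin.val_sub_add_one] at hm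
  rw [Fin.lt_def, Fin.le_def]
  split_ifs at hm <;> rw [Fin.lt_def] at * <;> omega

lemma cyclicSucc_orderIsoOfFin {C : Finset (Fin t)} [NeZero #C] (i : Fin #C) :
    cyclicSucc C (C.orderIsoOfFin rfl i) = C.orderIsoOfFin rfl (i + 1) := by
  simp only [coe_orderIsoOfFin_apply]
  set e := C.orderEmbOfFin rfl
  have hpos : 0 < #C := Nat.pos_of_ne_zero (NeZero.ne #C)
  have hval := Fin.val_add_one_eq_mod i
  have := i.isLt
  by_cases hi : i.val + 1 = #C
  · have hzero : i + 1 = ⟨0, hpos⟩ := Fin.ext (by rw [hval, hi, Nat.mod_self])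
    have hmax : e i = C.max' (card_pos.1 hpos) := by
      rw [← orderEmbOfFin_last rfl hpos]
      exact congrArg e (Fin.ext (by simp only; omega))
    rw [hzero, orderEmbOfFin_zero, hmax, cyclicSucc_max']
  · have hv : ((i + 1 : Fin #C) : ℕ) = i + 1 := by rw [hval, Nat.mod_eq_of_lt (by omega)]
    have hlt : i < i + 1 := Fin.lt_def.2 (by omega)
    refine cyclicSucc_eq_of_lt (orderEmbOfFin_mem C rfl _) (e.strictMono hlt) fun z hz hiz => ?_
    obtain ⟨m, rfl⟩ : z ∈ Set.range e := by rwa [range_orderEmbOfFin]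
    have him := Fin.lt_def.1 (e.lt_iff_lt.1 hiz)
    exact e.monotone (Fin.le_def.2 (by omega))

end CyclicSucc

section Interval

variable {α : Type*} [LinearOrder α]

def IsIntervalIn (B S : Finset α) : Prop :=
  ∀ a ∈ B, ∀ b ∈ B, ∀ x ∈ S, a ≤ x → x ≤ b → x ∈ B

lemma IsIntervalIn.lt_min'_or_max'_lt {B S : Finset α} (hBS : IsIntervalIn B S) (hB : B.Nonempty)
    {x : α} (hx : x ∈ S) (hxB : x ∉ B) : x < B.min' hB ∨ B.max' hB < x := by
  by_contra! h
  exact hxB (hBS _ (B.min'_mem hB) _ (B.max'_mem hB) x hx h.1 h.2)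

lemma isNC_of_subset {P Q : Finset (Finset α)} (h : P ⊆ Q) (hQ : IsNC Q) : IsNC P :=
  fun i j k l hik hkj hjl B hB C hC => hQ i j k l hik hkj hjl B (h hB) C (h hC)

def hullIn (S C : Finset α) : Finset α :=
  S.filter fun x => ∃ a ∈ C, ∃ b ∈ C, a ≤ x ∧ x ≤ b

/-- A block of a non-crossing partition whose hull contains the fewest points is an interval. -/
lemma exists_isIntervalIn_of_isNC {P : Finset (Finset α)} (hP : P.Nonempty)
    (hdis : (P : Set (Finset α)).PairwiseDisjoint id) (hnc : IsNC P) :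
    ∃ B ∈ P, IsIntervalIn B (P.sup id) := by
  obtain ⟨B, hBP, hBmin⟩ := P.exists_min_image (fun C => (hullIn (P.sup id) C).card) hP
  refine ⟨B, hBP, fun a ha b hb x hxS hax hxb => ?_⟩
  by_contra hxB
  obtain ⟨C, hCP, hxC⟩ := mem_sup.1 hxS
  have hCB : C ≠ B := fun h => hxB (h ▸ hxC)
  have hdisj : Disjoint B C := hdis hBP hCP hCB.symm
  have hax' : a < x := lt_of_le_of_ne hax fun h => hxB (h ▸ ha)
  have hxb' : x < b := lt_of_le_of_ne hxb fun h => hxB (h.symm ▸ hb)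
  have hC_inside : ∀ y ∈ C, a < y ∧ y < b := by
    intro y hy
    constructor
    · by_contra! hya
      rcases hya.lt_or_eq with hya | rfl
      · exact hnc y x a b hya hax' hxb' C hCP B hBP hCB hy hxC ha hb
      · exact disjoint_left.1 hdisj ha hy
    · by_contra! hby
      rcases hby.lt_or_eq with hby | rfl
      · exact hnc a b x y hax' hxb' hby B hBP C hCP hCB.symm ha hb hxC hy
      · exact disjoint_left.1 hdisj hb hy
  have hsub : hullIn (P.sup id) C ⊂ hullIn (P.sup id) B := by
    refine ssubset_iff_of_subset (fun y hy => ?_) |>.2 ⟨a, ?_, fun ha' => ?_⟩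
    · obtain ⟨hyS, c, hc, c', hc', hcy, hyc'⟩ := mem_filter.1 hy
      exact mem_filter.2 ⟨hyS, a, ha, b, hb,
        (hC_inside c hc).1.le.trans hcy, hyc'.trans (hC_inside c' hc').2.le⟩
    · exact mem_filter.2 ⟨mem_sup.2 ⟨B, hBP, ha⟩, a, ha, a, ha, le_rfl, le_rfl⟩
    · obtain ⟨-, c, hc, -, -, hca, -⟩ := mem_filter.1 ha'
      exact (hC_inside c hc).1.not_ge hca
  exact (card_lt_card hsub).not_ge (hBmin C hCP)

end Interval

section IntervalBlock

variable {t : ℕ} [NeZero t] {S B : Finset (Fin t)}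

lemma cyclicSucc_eq_of_isIntervalIn (hBS : IsIntervalIn B S) (hsub : B ⊆ S) (hB : B.Nonempty)
    {s : Fin t} (hs : s ∈ B) (hsb : s ≠ B.max' hB) : cyclicSucc S s = cyclicSucc B s := by
  obtain ⟨h₁, h₂⟩ := cyclicSucc_mem_Ioc (B.max'_mem hB) (lt_of_le_of_ne (B.le_max' s hs) hsb)
  refine cyclicSucc_eq_of_lt (hsub (cyclicSucc_mem ⟨s, hs⟩ s)) h₁ fun z hz hsz => ?_
  rcases lt_or_ge (B.max' hB) z with hbz | hzb
  · exact h₂.trans hbz.le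
  · have hzB := hBS s hs _ (B.max'_mem hB) z hz hsz.le hzb
    have hm := Fin.le_def.1 (cyclicSucc_sub_le hzB s)
    rw [Fin.val_sub_add_one, Fin.val_sub_add_one, if_pos h₁, if_pos hsz] at hm
    rw [Fin.lt_def] at h₁ hsz
    exact Fin.le_def.2 (by omega)

lemma cyclicSucc_max'_not_mem (hBS : IsIntervalIn B S) (hsub : B ⊆ S) (hne : B ≠ S)
    (hB : B.Nonempty) : cyclicSucc S (B.max' hB) ∉ B := by
  intro hmem
  obtain ⟨y, hyS, hyB⟩ := exists_of_ssubset (lt_of_le_of_ne hsub hne)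
  have hm := Fin.le_def.1 (cyclicSucc_sub_le hyS (B.max' hB))
  have hcb := Fin.le_def.1 (B.le_max' _ hmem)
  have hac := Fin.le_def.1 (B.min'_le _ hmem)
  have hy := hBS.lt_min'_or_max'_lt hB hyS hyB
  have := y.isLt
  rw [Fin.val_sub_add_one, Fin.val_sub_add_one] at hm
  split_ifs at hm <;> simp only [Fin.lt_def] at * <;> omega

lemma cyclicSucc_eq_min'_of_not_mem (hBS : IsIntervalIn B S) (hsub : B ⊆ S) (hB : B.Nonempty)
    {s : Fin t} (hsS : s ∈ S) (hsB : s ∉ B) (hc : cyclicSucc S s ∈ B) :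
    cyclicSucc S s = B.min' hB := by
  by_contra hne
  have hac := Fin.lt_def.1 (lt_of_le_of_ne (B.min'_le _ hc) (Ne.symm hne))
  have hs := hBS.lt_min'_or_max'_lt hB hsS hsB
  have hm := Fin.le_def.1 (cyclicSucc_sub_le (hsub (B.min'_mem hB)) s)
  have hcb := Fin.le_def.1 (B.le_max' _ hc)
  have := (cyclicSucc S s).isLt
  rw [Fin.val_sub_add_one, Fin.val_sub_add_one] at hm
  split_ifs at hm <;> simp only [Fin.lt_def] at * <;> omega

lemma cyclicSucc_sdiff_of_not_mem {s : Fin t} (hsS : s ∈ S) (hc : cyclicSucc S s ∉ B) :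
    cyclicSucc (S \ B) s = cyclicSucc S s :=
  cyclicSucc_eq_of_forall (mem_sdiff.2 ⟨cyclicSucc_mem ⟨s, hsS⟩ s, hc⟩)
    fun _ hy => cyclicSucc_sub_le (mem_sdiff.1 hy).1 s

lemma cyclicSucc_sdiff_of_mem (hBS : IsIntervalIn B S) (hsub : B ⊆ S) (hne : B ≠ S)
    (hB : B.Nonempty) {s : Fin t} (hsS : s ∈ S) (hsB : s ∉ B) (hc : cyclicSucc S s ∈ B) :
    cyclicSucc (S \ B) s = cyclicSucc S (B.max' hB) := by
  set p := cyclicSucc S (B.max' hB)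
  have hca := cyclicSucc_eq_min'_of_not_mem hBS hsub hB hsS hsB hc
  have hpB : p ∉ B := cyclicSucc_max'_not_mem hBS hsub hne hB
  have hpS : p ∈ S := cyclicSucc_mem ⟨s, hsS⟩ _
  refine cyclicSucc_eq_of_forall (mem_sdiff.2 ⟨hpS, hpB⟩) fun y hy => ?_
  obtain ⟨hyS, hyB⟩ := mem_sdiff.1 hy
  have h1y := Fin.le_def.1 (cyclicSucc_sub_le hyS s)
  have h1p := Fin.le_def.1 (cyclicSucc_sub_le hpS s)
  have h2y := Fin.le_def.1 (cyclicSucc_sub_le hyS (B.max' hB))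
  have h2a := Fin.le_def.1 (cyclicSucc_sub_le (hsub (B.min'_mem hB)) (B.max' hB))
  rw [hca] at h1y h1p
  have hs := hBS.lt_min'_or_max'_lt hB hsS hsB
  have hy := hBS.lt_min'_or_max'_lt hB hyS hyB
  have hp := hBS.lt_min'_or_max'_lt hB hpS hpB
  have hab := Fin.le_def.1 (B.min'_le _ (B.max'_mem hB))
  have := y.isLt
  have := p.isLt
  rw [Fin.le_def]
  simp only [Fin.val_sub_add_one] at h1y h1p h2y h2a ⊢
  split_ifs at h1y h1p h2y h2a ⊢ <;> simp only [Fin.lt_def] at * <;> omega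

end IntervalBlock

section KrewerasLabelling

variable {t : ℕ} [NeZero t] {β : Type*}

/-- With `S = univ` this reads `j (s + 1) = j (next element of the block of s)`; a general `S`
lets the count delete blocks one at a time. -/
def IsKrewerasLabelling (S : Finset (Fin t)) (P : Finset (Finset (Fin t))) (j : Fin t → β) :
    Prop :=
  ∀ C ∈ P, ∀ s ∈ C, j (cyclicSucc S s) = j (cyclicSucc C s)

variable {S B : Finset (Fin t)}

lemma forall_mem_label_cyclicSucc_iff (hBS : IsIntervalIn B S) (hsub : B ⊆ S) (hB : B.Nonempty)
    (j : Fin t → β) :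
    (∀ s ∈ B, j (cyclicSucc S s) = j (cyclicSucc B s)) ↔
      j (B.min' hB) = j (cyclicSucc S (B.max' hB)) := by
  constructor
  · intro h
    simpa only [cyclicSucc_max'] using (h _ (B.max'_mem hB)).symm
  · intro h s hs
    by_cases hsb : s = B.max' hB
    · rw [hsb, cyclicSucc_max']
      exact h.symm
    · rw [cyclicSucc_eq_of_isIntervalIn hBS hsub hB hs hsb]

lemma label_cyclicSucc_sdiff (hBS : IsIntervalIn B S) (hsub : B ⊆ S) (hne : B ≠ S)
    (hB : B.Nonempty) {j : Fin t → β} (htie : j (B.min' hB) = j (cyclicSucc S (B.max' hB)))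
    {s : Fin t} (hsS : s ∈ S) (hsB : s ∉ B) :
    j (cyclicSucc (S \ B) s) = j (cyclicSucc S s) := by
  by_cases hc : cyclicSucc S s ∈ B
  · rw [cyclicSucc_sdiff_of_mem hBS hsub hne hB hsS hsB hc,
      cyclicSucc_eq_min'_of_not_mem hBS hsub hB hsS hsB hc, htie]
  · rw [cyclicSucc_sdiff_of_not_mem hsS hc]

lemma isKrewerasLabelling_iff_erase {P : Finset (Finset (Fin t))}
    (hdis : (P : Set (Finset (Fin t))).PairwiseDisjoint id) (hBP : B ∈ P)
    (hBS : IsIntervalIn B (P.sup id)) (hne : B ≠ P.sup id) (hB : B.Nonempty) (j : Fin t → β) :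
    IsKrewerasLabelling (P.sup id) P j ↔
      IsKrewerasLabelling ((P.erase B).sup id) (P.erase B) j ∧
        j (B.min' hB) = j (cyclicSucc (P.sup id) (B.max' hB)) := by
  have hsub : B ⊆ P.sup id := le_sup (f := id) hBP
  have hout : ∀ D ∈ P.erase B, ∀ s ∈ D, s ∈ P.sup id ∧ s ∉ B := fun D hD s hs =>
    mem_sdiff.1 (sup_erase_eq_sdiff hdis hBP ▸
      le_sup (f := id) hD hs)
  rw [sup_erase_eq_sdiff hdis hBP]
  constructor
  · intro h
    have htie := (forall_mem_label_cyclicSucc_iff hBS hsub hB j).1 (h B hBP)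
    refine ⟨fun D hD s hs => ?_, htie⟩
    obtain ⟨hsS, hsB⟩ := hout D hD s hs
    rw [label_cyclicSucc_sdiff hBS hsub hne hB htie hsS hsB]
    exact h D (mem_of_mem_erase hD) s hs
  · rintro ⟨h, htie⟩ D hD s hs
    by_cases hDB : D = B
    · subst hDB
      exact (forall_mem_label_cyclicSucc_iff hBS hsub hB j).2 htie s hs
    · have hD' := mem_erase.2 ⟨hDB, hD⟩
      obtain ⟨hsS, hsB⟩ := hout D hD' s hs
      rw [← label_cyclicSucc_sdiff hBS hsub hne hB htie hsS hsB]
      exact h D hD' s hs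

lemma isKrewerasLabelling_update {P : Finset (Finset (Fin t))} {a : Fin t}
    (ha : a ∉ P.sup id) (j : Fin t → β) (v : β) :
    IsKrewerasLabelling (P.sup id) P (Function.update j a v) ↔
      IsKrewerasLabelling (P.sup id) P j := by
  have hfix : ∀ x ∈ P.sup id, Function.update j a v x = j x := fun x hx =>
    Function.update_of_ne (ne_of_mem_of_not_mem hx ha) _ _
  refine forall₂_congr fun D hD => forall₂_congr fun s hs => ?_
  have hD : D ⊆ P.sup id := le_sup (f := id) hD
  rw [hfix _ (cyclicSucc_mem ⟨s, hD hs⟩ s), hfix _ (hD (cyclicSucc_mem ⟨s, hs⟩ s))]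

lemma card_isKrewerasLabelling_mul_card [Fintype β] {P : Finset (Finset (Fin t))}
    (hdis : (P : Set (Finset (Fin t))).PairwiseDisjoint id) (hBP : B ∈ P)
    (hBS : IsIntervalIn B (P.sup id)) (hne : B ≠ P.sup id) (hB : B.Nonempty) :
    #{j : Fin t → β | IsKrewerasLabelling (P.sup id) P j} * Fintype.card β =
      #{j : Fin t → β | IsKrewerasLabelling ((P.erase B).sup id) (P.erase B) j} := by
  have hmin : B.min' hB ∉ (P.erase B).sup id := by
    rw [sup_erase_eq_sdiff hdis hBP]
    exact fun h => (mem_sdiff.1 h).2 (B.min'_mem hB)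
  have htie : B.min' hB ≠ cyclicSucc (P.sup id) (B.max' hB) := fun h =>
    cyclicSucc_max'_not_mem hBS (le_sup (f := id) hBP) hne hB (h ▸ B.min'_mem hB)
  rw [filter_congr fun j _ => isKrewerasLabelling_iff_erase hdis hBP hBS hne hB j]
  exact card_filter_and_eq_mul htie _ (isKrewerasLabelling_update hmin)

end KrewerasLabelling

theorem card_isKrewerasLabelling {t : ℕ} [NeZero t] {β : Type*} [Fintype β] [Nonempty β]
    (P : Finset (Finset (Fin t))) (hP : P.Nonempty) (hne : ∅ ∉ P)
    (hdis : (P : Set (Finset (Fin t))).PairwiseDisjoint id) (hnc : IsNC P) :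
    #{j : Fin t → β | IsKrewerasLabelling (P.sup id) P j} = Fintype.card β ^ (t + 1 - #P) := by
  induction hn : #P using Nat.strong_induction_on generalizing P with
  | _ n ih =>
  subst hn
  obtain ⟨B, hBP, hBS⟩ := exists_isIntervalIn_of_isNC hP hdis hnc
  have hB : B.Nonempty := nonempty_iff_ne_empty.2 fun h => hne (h ▸ hBP)
  rcases (P.erase B).eq_empty_or_nonempty with hP' | hP'
  · have hPB : P = {B} := by
      rw [← insert_erase hBP, hP', insert_empty]
    subst hPB
    have hall (j : Fin t → β) : IsKrewerasLabelling (({B} : Finset _).sup id) {B} j := by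
      intro C hC s _
      rw [mem_singleton.1 hC, sup_singleton, id]
    rw [filter_true_of_mem fun j _ => hall j, card_univ, Fintype.card_fun, Fintype.card_fin,
      card_singleton, Nat.add_sub_cancel]
  · obtain ⟨C, hC⟩ := hP'
    have hCP := mem_of_mem_erase hC
    have hBne : B ≠ P.sup id := by
      intro hBS_eq
      obtain ⟨x, hx⟩ := nonempty_iff_ne_empty.2 fun h => hne (h ▸ hCP)
      exact disjoint_left.1 (hdis hCP hBP (mem_erase.1 hC).1) hx
        (hBS_eq ▸ le_sup (f := id) hCP hx)
    have hstep := card_isKrewerasLabelling_mul_card (β := β) hdis hBP hBS hBne hB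
    have hcard := card_erase_of_mem hBP
    have hPt := (card_le_of_pairwiseDisjoint hne hdis).trans_eq (Fintype.card_fin t)
    have hpos := card_pos.2 hP
    rw [ih _ (by omega) (P.erase B) ⟨C, hC⟩ (fun h => hne (mem_of_mem_erase h))
      (hdis.subset (coe_subset.2 (erase_subset B P))) (isNC_of_subset (erase_subset B P) hnc)
      rfl, hcard, show t + 1 - (#P - 1) = (t + 1 - #P) + 1 by omega, pow_succ] at hstep
    exact Nat.eq_of_mul_eq_mul_right Fintype.card_pos hstep

namespace Matrix

variable {m R : Type*} [Fintype m] [DecidableEq m] [Semiring R]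

theorem list_prod_ofFn_apply : ∀ {n : ℕ} (M : Fin n → Matrix m m R) (i k : m),
    (List.ofFn M).prod i k = ∑ j : Fin (n + 1) → m,
      if j 0 = i ∧ j (Fin.last n) = k then
        (List.ofFn fun s => M s (j s.castSucc) (j s.succ)).prod else 0
  | 0, M, i, k => by
    rw [List.ofFn_zero, List.prod_nil, ← (Equiv.funUnique (Fin 1) m).symm.sum_comp]
    rcases eq_or_ne i k with rfl | hik
    · simp
    · have hempty : ∀ x : m, ¬(x = i ∧ x = k) := fun x h => hik (h.1 ▸ h.2)
      simp [one_apply_ne hik, hempty]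
  | n + 1, M, i, k => by
    calc (List.ofFn M).prod i k
        = ∑ j : Fin (n + 1) → m, if j (Fin.last n) = k then
            M 0 i (j 0) * (List.ofFn fun s => M s.succ (j s.castSucc) (j s.succ)).prod
          else 0 := by
          rw [List.ofFn_succ, List.prod_cons, mul_apply]
          simp_rw [list_prod_ofFn_apply (fun s => M s.succ), mul_sum, mul_ite, mul_zero]
          rw [sum_comm]
          simp [ite_and]
      _ = _ := by
          conv_rhs => rw [← (Fin.consEquiv fun _ => m).sum_comp, Fintype.sum_prod_type]
          simp [ite_and, List.ofFn_succ, ← Fin.succ_last]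

theorem trace_list_prod_ofFn {n : ℕ} [NeZero n] (M : Fin n → Matrix m m R) :
    trace (List.ofFn M).prod =
      ∑ j : Fin n → m, (List.ofFn fun s => M s (j s) (j (s + 1))).prod := by
  obtain ⟨n, rfl⟩ := Nat.exists_eq_succ_of_ne_zero (NeZero.ne n)
  have hsnoc (j : Fin (n + 1) → m) (s : Fin (n + 1)) :
      Fin.snoc (α := fun _ => m) j (j 0) s.succ = j (s + 1) := by
    induction s using Fin.lastCases with
    | last => rw [Fin.succ_last, Fin.snoc_last, Fin.last_add_one]
    | cast i => rw [Fin.succ_castSucc, Fin.snoc_castSucc, Fin.coeSucc_eq_succ]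
  simp_rw [trace, diag, list_prod_ofFn_apply]
  rw [sum_comm]
  simp only [ite_and, sum_ite_eq]
  rw [← (Fin.snocEquiv fun _ => m).sum_comp, Fintype.sum_prod_type, sum_comm]
  refine sum_congr rfl fun j _ => ?_
  have h0 (v : m) : Fin.snoc (α := fun _ => m) j v 0 = j 0 := Fin.snoc_castSucc (i := 0) ..
  simp only [Fin.snocEquiv_apply, mem_univ, if_true, Fin.snoc_last, h0,
    sum_ite_eq', Fin.snoc_castSucc, hsnoc]

end Matrix

namespace NCP

def indiscrete (t : ℕ) [NeZero t] : NCP t :=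
  ⟨Finpartition.indiscrete univ_nonempty.ne_empty, fun _ _ _ _ _ _ _ _ hB _ hC hBC =>
    absurd ((mem_singleton.1 hB).trans (mem_singleton.1 hC).symm) hBC⟩

lemma card_lt_of_ne_indiscrete {t : ℕ} [NeZero t] {π : NCP t} (hπ : π ≠ indiscrete t)
    {C : Finset (Fin t)} (hC : C ∈ π.1.parts) : #C < t := by
  refine ((card_le_univ C).trans_eq (Fintype.card_fin t)).lt_of_ne fun hCt => hπ ?_
  have hCu : C = univ := eq_univ_of_card C (by rw [hCt, Fintype.card_fin])
  refine Subtype.ext (Finpartition.ext ?_)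
  rw [indiscrete, Finpartition.indiscrete_parts, eq_singleton_iff_unique_mem]
  refine ⟨hCu ▸ hC, fun D hD => ?_⟩
  obtain ⟨x, hx⟩ := π.1.nonempty_of_mem_parts hD
  exact (π.1.eq_of_mem_parts hD hC hx (hCu ▸ mem_univ x)).trans hCu

theorem eq_of_forall_sum_prod_eq {R : Type*} [CommRing R] {f g : ℕ → R}
    (h : ∀ t ≠ 0, ∑ π : NCP t, ∏ C ∈ π.1.parts, f #C = ∑ π : NCP t, ∏ C ∈ π.1.parts, g #C)
    (t : ℕ) (ht : t ≠ 0) : f t = g t := by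
  induction t using Nat.strong_induction_on with
  | _ t ih =>
  have : NeZero t := ⟨ht⟩
  have hsplit (u : ℕ → R) : ∑ π : NCP t, ∏ C ∈ π.1.parts, u #C =
      u t + ∑ π ∈ univ.erase (indiscrete t), ∏ C ∈ π.1.parts, u #C := by
    rw [← add_sum_erase _ _ (mem_univ (indiscrete t))]
    simp [indiscrete]
  have hrest : ∑ π ∈ univ.erase (indiscrete t), ∏ C ∈ π.1.parts, f #C =
      ∑ π ∈ univ.erase (indiscrete t), ∏ C ∈ π.1.parts, g #C :=
    sum_congr rfl fun π hπ => prod_congr rfl fun C hC =>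
      ih _ (card_lt_of_ne_indiscrete (ne_of_mem_erase hπ) hC)
        (card_ne_zero.2 (π.1.nonempty_of_mem_parts hC))
  have := h t ht
  rwa [hsplit f, hsplit g, hrest, add_left_inj] at this

end NCP

section UniformlyRCyclic

variable {A : Type*} {κ : ∀ k, (Fin k → A) → ℂ} {d : ℕ} {X : Matrix (Fin d) (Fin d) A}
  {α : ℕ → ℂ}

def IsUniformlyRCyclic (κ : ∀ k, (Fin k → A) → ℂ) (X : Matrix (Fin d) (Fin d) A) (α : ℕ → ℂ) :
    Prop :=
  ∀ (t : ℕ) (ht : t ≠ 0) (ij : Fin t → Fin d × Fin d),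
    κ t (fun s => X (ij s).1 (ij s).2) =
      if ∀ s : Fin t,
          (ij s).2 = (ij ⟨(s.val + 1) % t, Nat.mod_lt _ (Nat.pos_of_ne_zero ht)⟩).1
        then α t else 0

namespace IsUniformlyRCyclic

lemma cumulant_eq (hX : IsUniformlyRCyclic κ X α) {t : ℕ} [NeZero t]
    (ij : Fin t → Fin d × Fin d) :
    κ t (fun s => X (ij s).1 (ij s).2) = if ∀ s, (ij s).2 = (ij (s + 1)).1 then α t else 0 := by
  have hsucc (s : Fin t) : (⟨(s.val + 1) % t, Nat.mod_lt _ (Nat.pos_of_ne_zero (NeZero.ne t))⟩ :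
      Fin t) = s + 1 := Fin.ext (Fin.val_add_one_eq_mod s).symm
  simp only [hX t (NeZero.ne t), hsucc]

lemma cumulant_block (hX : IsUniformlyRCyclic κ X α) {t : ℕ} [NeZero t] (j : Fin t → Fin d)
    {C : Finset (Fin t)} (hC : C.Nonempty) :
    κ #C (fun i => X (j (C.orderIsoOfFin rfl i)) (j ((C.orderIsoOfFin rfl i : Fin t) + 1))) =
      if ∀ s ∈ C, j (s + 1) = j (cyclicSucc C s) then α #C else 0 := by
  have : NeZero #C := ⟨card_ne_zero.2 hC⟩
  rw [hX.cumulant_eq fun i => (j (C.orderIsoOfFin rfl i), j ((C.orderIsoOfFin rfl i : Fin t) + 1))]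
  simp only [← cyclicSucc_orderIsoOfFin]
  congr 1
  exact propext (((C.orderIsoOfFin rfl).surjective.forall
    (p := fun s : C => j (s + 1) = j (cyclicSucc C s))).symm.trans Subtype.forall)

lemma extMul_eq (hX : IsUniformlyRCyclic κ X α) {t : ℕ} [NeZero t] (j : Fin t → Fin d)
    (π : Finpartition (univ : Finset (Fin t))) :
    extMul κ π (fun s => X (j s) (j (s + 1))) =
      if IsKrewerasLabelling univ π.parts j then ∏ C ∈ π.parts, α #C else 0 := by
  rw [extMul, prod_congr rfl fun C hC => hX.cumulant_block j (π.nonempty_of_mem_parts hC),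
    prod_ite_zero]
  simp only [IsKrewerasLabelling, cyclicSucc_univ]
  congr 1

lemma inv_mul_sum_moment [Ring A] [Algebra ℂ A] {φ : A →ₗ[ℂ] ℂ} (hκ : MomentCumulant φ κ)
    (hX : IsUniformlyRCyclic κ X α) (hd : 0 < d) (t : ℕ) [NeZero t] :
    (d : ℂ)⁻¹ * ∑ i, φ ((List.ofFn fun _ : Fin t => X).prod i i) =
      ∑ π : NCP t, ∏ C ∈ π.1.parts, (d : ℂ) ^ (#C - 1) * α #C := by
  have : Nonempty (Fin d) := ⟨⟨0, hd⟩⟩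
  have hcount (π : NCP t) : #{j : Fin t → Fin d | IsKrewerasLabelling univ π.1.parts j} =
      d ^ (t + 1 - #π.1.parts) := by
    have := card_isKrewerasLabelling (β := Fin d) π.1.parts
      (π.1.parts_nonempty univ_nonempty.ne_empty) π.1.empty_notMem_parts π.1.disjoint π.2
    rwa [π.1.sup_parts, Fintype.card_fin] at this
  have htrace : ∑ i, φ ((List.ofFn fun _ : Fin t => X).prod i i) =
      φ (Matrix.trace (List.ofFn fun _ : Fin t => X).prod) := by
    rw [Matrix.trace, map_sum]
    rfl
  calc (d : ℂ)⁻¹ * ∑ i, φ ((List.ofFn fun _ : Fin t => X).prod i i)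
      = (d : ℂ)⁻¹ * ∑ π : NCP t, ∑ j : Fin t → Fin d,
          extMul κ π.1 (fun s => X (j s) (j (s + 1))) := by
        rw [htrace, Matrix.trace_list_prod_ofFn, map_sum, sum_comm]
        simp only [hκ t (NeZero.ne t)]
    _ = (d : ℂ)⁻¹ * ∑ π : NCP t, (d : ℂ) ^ (t + 1 - #π.1.parts) * ∏ C ∈ π.1.parts, α #C := by
        simp only [hX.extMul_eq, ← sum_filter, sum_const, hcount, nsmul_eq_mul, Nat.cast_pow]
    _ = _ := by
        rw [mul_sum]
        refine sum_congr rfl fun π _ => ?_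
        have hle : #π.1.parts ≤ t := by simpa using π.1.card_parts_le_card
        have hd' : (d : ℂ) ≠ 0 := Nat.cast_ne_zero.2 hd.ne'
        rw [prod_mul_distrib, π.1.prod_pow_card_sub_one, card_univ, Fintype.card_fin,
          show t + 1 - #π.1.parts = t - #π.1.parts + 1 by omega, pow_succ]
        field_simp

end IsUniformlyRCyclic

end UniformlyRCyclic

theorem stmt_9_general {A : Type*} [Ring A] [Algebra ℂ A]
    (φ : A →ₗ[ℂ] ℂ)
    (κ : ∀ k, (Fin k → A) → ℂ) (hκ : MomentCumulant φ κ)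
    (d : ℕ) (hd : 0 < d)
    (φd : Matrix (Fin d) (Fin d) A →ₗ[ℂ] ℂ)
    (hφd : ∀ Y : Matrix (Fin d) (Fin d) A, φd Y = (d : ℂ)⁻¹ * ∑ i, φ (Y i i))
    (κd : ∀ k, (Fin k → Matrix (Fin d) (Fin d) A) → ℂ)
    (hκd : MomentCumulant φd κd)
    (X : Matrix (Fin d) (Fin d) A) (α : ℕ → ℂ)
    (hX : ∀ (t : ℕ) (ht : t ≠ 0) (ij : Fin t → Fin d × Fin d),
      κ t (fun s => X (ij s).1 (ij s).2) =
        if ∀ s : Fin t,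
            (ij s).2 = (ij ⟨(s.val + 1) % t, Nat.mod_lt _ (Nat.pos_of_ne_zero ht)⟩).1
          then α t else 0) :
    ∀ (t : ℕ), t ≠ 0 → κd t (fun _ => X) = (d : ℂ) ^ (t - 1) * α t := by
  refine NCP.eq_of_forall_sum_prod_eq (f := fun k => κd k fun _ => X)
    (g := fun k => (d : ℂ) ^ (k - 1) * α k) fun t ht => ?_
  have : NeZero t := ⟨ht⟩
  calc ∑ π : NCP t, ∏ C ∈ π.1.parts, κd #C (fun _ => X)
      = φd (List.ofFn fun _ : Fin t => X).prod := (hκd t ht fun _ => X).symm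
    _ = _ := by
      rw [hφd]
      exact IsUniformlyRCyclic.inv_mul_sum_moment hκ hX hd t

/-- if `X = (x_{ij}) ∈ M_d(A)` is uniformly R-cyclic with determining
sequence `(α_t)` — that is, `κ_t(x_{i₁j₁},...,x_{i_tj_t}) = α_t` when
`j₁ = i₂, ..., j_{t−1} = i_t, j_t = i₁` and `0` otherwise — then in
`(M_d(A), φ^d)` with `φ^d(X) = (1/d) Σᵢ φ(x_{ii})` the free cumulants of `X`
are `κ^d_t(X,...,X) = d^{t−1} α_t`. -/
theorem stmt_9 {A : Type*} [Ring A] [Algebra ℂ A]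
    (φ : A →ₗ[ℂ] ℂ) (hunit : φ 1 = 1)
    (κ : ∀ k, (Fin k → A) → ℂ) (hκ : MomentCumulant φ κ)
    (d : ℕ) (hd : 0 < d)
    (φd : Matrix (Fin d) (Fin d) A →ₗ[ℂ] ℂ)
    (hφd : ∀ Y : Matrix (Fin d) (Fin d) A, φd Y = (d : ℂ)⁻¹ * ∑ i, φ (Y i i))
    (κd : ∀ k, (Fin k → Matrix (Fin d) (Fin d) A) → ℂ)
    (hκd : MomentCumulant φd κd)
    (X : Matrix (Fin d) (Fin d) A) (α : ℕ → ℂ)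
    (hX : ∀ (t : ℕ) (ht : t ≠ 0) (ij : Fin t → Fin d × Fin d),
      κ t (fun s => X (ij s).1 (ij s).2) =
        if ∀ s : Fin t,
            (ij s).2 = (ij ⟨(s.val + 1) % t, Nat.mod_lt _ (Nat.pos_of_ne_zero ht)⟩).1
          then α t else 0) :
    ∀ (t : ℕ), t ≠ 0 → κd t (fun _ => X) = (d : ℂ) ^ (t - 1) * α t :=
  stmt_9_general φ κ hκ d hd φd hφd κd hκd X α hX
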